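/- arXiv:2308.12054 — 7 statements merged into one kernel-verified Lean document; each statement's English description precedes it below -/
import Mathlib

section
/- Let c_1, c_2 be two monotone conjunctions on {0,1}^n over disjoint index sets, each of even length ℓ with 3 ≤ ℓ ≤ n/2, and set ρ = ℓ/2. Under the uniform distribution D on {0,1}^n, the exact-in-the-ball robust risk satisfies R_ρ(c_1, c_2) ≥ (1 − 2^{−2ρ})/2. -/
open Finset

set_option maxHeartbeats 1600000 in
theorem stmt_4 (n ℓ ρ : ℕ) (I₁ I₂ : Finset (Fin n)) (hdisj : Disjoint I₁ I₂)
    (hc₁ : I₁.card = ℓ) (hc₂ : I₂.card = ℓ) (heven : Even ℓ) (hℓ : 3 ≤ ℓ)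
    (hn : 2 * ℓ ≤ n) (hρ : ρ = ℓ / 2) :
    (1 - (2 : ℝ) ^ (-(2 * ρ : ℤ))) / 2 ≤
      ((univ.filter (fun x : Fin n → Bool => ∃ z : Fin n → Bool, hammingDist x z ≤ ρ ∧
        decide (∀ i ∈ I₁, z i = true) ≠ decide (∀ i ∈ I₂, z i = true))).card : ℝ) / 2 ^ n := by
  classical
  obtain ⟨k, hk⟩ := heven
  have hℓρ : ℓ = 2 * ρ := by omega
  set S : Finset (Fin n → Bool) :=
    univ.filter (fun x : Fin n → Bool => ∃ z : Fin n → Bool, hammingDist x z ≤ ρ ∧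
        decide (∀ i ∈ I₁, z i = true) ≠ decide (∀ i ∈ I₂, z i = true)) with hS
  set A : Finset (Fin n → Bool) :=
    univ.filter (fun x => (I₁.filter fun i => x i = false).card ≤ ρ) with hA
  set C : Finset (Fin n → Bool) := A.filter (fun x => ∀ i ∈ I₂, x i = true) with hC
  set G : Finset (Fin n → Bool) := A.filter (fun x => ¬ ∀ i ∈ I₂, x i = true) with hG
  -- Step 1 : G ⊆ S
  have hGS : G ⊆ S := by
    intro x hx
    simp only [hG, hA, mem_filter, mem_univ, true_and] at hx
    obtain ⟨hxA, hxB⟩ := hx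
    push_neg at hxB
    obtain ⟨j, hjI₂, hjval⟩ := hxB
    simp only [Bool.not_eq_true] at hjval
    refine mem_filter.mpr ⟨mem_univ _, ?_⟩
    refine ⟨fun i => if i ∈ I₁ then true else x i, ?_, ?_⟩
    · have hset : ({i | x i ≠ (if i ∈ I₁ then true else x i)} : Finset (Fin n)) =
          I₁.filter fun i => x i = false := by
        ext i
        by_cases hi : i ∈ I₁ <;> simp [hi, Bool.not_eq_true]
      calc hammingDist x (fun i => if i ∈ I₁ then true else x i)
          = ({i | x i ≠ (if i ∈ I₁ then true else x i)} : Finset (Fin n)).card := rfl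
        _ ≤ ρ := by rw [hset]; exact hxA
    · have h1 : ∀ i ∈ I₁, (if i ∈ I₁ then true else x i) = true := by
        intro i hi; simp [hi]
      have hj1 : j ∉ I₁ := fun h => (Finset.disjoint_left.mp hdisj h) hjI₂
      have h2' : ¬ ∀ i ∈ I₂, (if i ∈ I₁ then true else x i) = true := by
        intro h
        have := h j hjI₂
        rw [if_neg hj1] at this
        rw [hjval] at this
        exact Bool.false_ne_true this
      rw [decide_eq_true h1, decide_eq_false h2']
      simp
  -- Step 2 : 2 ^ n ≤ 2 * A.card
  have huniv : (univ : Finset (Fin n → Bool)).card = 2 ^ n := by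
    simp [Finset.card_univ]
  have hcompl : ∀ x : Fin n → Bool, (I₁.filter fun i => x i = false).card +
      (I₁.filter fun i => x i = true).card = ℓ := by
    intro x
    have h := Finset.card_filter_add_card_filter_not (s := I₁)
      (p := fun i => x i = false)
    have heq2 : (I₁.filter fun i => ¬ x i = false) = I₁.filter fun i => x i = true := by
      ext i
      simp [Bool.not_eq_false]
    rw [heq2, hc₁] at h
    exact h
  have hAcard : 2 ^ n ≤ 2 * A.card := by
    have hinj : (univ.filter (fun x : Fin n → Bool =>
        ¬ (I₁.filter fun i => x i = false).card ≤ ρ)).card ≤ A.card := by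
      apply Finset.card_le_card_of_injOn (fun x i => if i ∈ I₁ then !(x i) else x i)
      · intro x hx
        simp only [mem_coe, mem_filter, mem_univ, true_and, not_le] at hx
        refine mem_filter.mpr ⟨mem_univ _, ?_⟩
        have heq : (I₁.filter fun i => (if i ∈ I₁ then !(x i) else x i) = false) =
            I₁.filter fun i => x i = true := by
          ext i
          simp only [Finset.mem_filter]
          refine and_congr_right fun hi => ?_
          rw [if_pos hi]
          simp
        rw [heq]
        have := hcompl x
        omega
      · intro x _ y _ hxy
        funext i
        have := congrFun hxy i
        by_cases hi : i ∈ I₁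
        · simp only [hi, if_pos] at this
          exact Bool.not_inj this
        · simpa [hi] using this
    have hsplit : A.card + (univ.filter (fun x : Fin n → Bool =>
        ¬ (I₁.filter fun i => x i = false).card ≤ ρ)).card = 2 ^ n := by
      rw [hA, Finset.card_filter_add_card_filter_not, huniv]
    calc 2 ^ n = A.card + (univ.filter (fun x : Fin n → Bool =>
          ¬ (I₁.filter fun i => x i = false).card ≤ ρ)).card := hsplit.symm
      _ ≤ A.card + A.card := Nat.add_le_add_left hinj _
      _ = 2 * A.card := (two_mul _).symm
  -- Step 3 : A.card = 2 ^ ℓ * C.card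
  have hfib : A.card = 2 ^ ℓ * C.card := by
    have hmaps : ∀ x ∈ A, (fun i => if i ∈ I₂ then true else x i) ∈ C := by
      intro x hx
      simp only [hA, mem_filter, mem_univ, true_and] at hx
      refine mem_filter.mpr ⟨mem_filter.mpr ⟨mem_univ _, ?_⟩, ?_⟩
      · have heq : (I₁.filter fun i => (if i ∈ I₂ then true else x i) = false) =
            I₁.filter fun i => x i = false := by
          ext i
          simp only [Finset.mem_filter]
          refine and_congr_right fun hi => ?_
          have : i ∉ I₂ := fun h => (Finset.disjoint_left.mp hdisj hi) h
          rw [if_neg this]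
        rw [heq]; exact hx
      · intro i hi; simp [hi]
    have hsum := Finset.card_eq_sum_card_fiberwise hmaps
    rw [hsum]
    have hfiber : ∀ y ∈ C, (A.filter (fun x =>
        (fun i => if i ∈ I₂ then true else x i) = y)).card = 2 ^ ℓ := by
      intro y hy
      simp only [hC, mem_filter] at hy
      obtain ⟨hyA, hyT⟩ := hy
      simp only [hA, mem_filter, mem_univ, true_and] at hyA
      rw [← hc₂, ← Finset.card_powerset]
      apply Finset.card_bij' (fun x _ => I₂.filter fun i => x i = false)
        (fun s _ => fun i => if i ∈ s then false else y i)
      · intro x hx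
        exact Finset.mem_powerset.mpr (Finset.filter_subset _ _)
      · intro s hs
        have hsI₂ := Finset.mem_powerset.mp hs
        refine mem_filter.mpr ⟨mem_filter.mpr ⟨mem_univ _, ?_⟩, ?_⟩
        · have heq : (I₁.filter fun i => (if i ∈ s then false else y i) = false) =
              I₁.filter fun i => y i = false := by
            ext i
            simp only [Finset.mem_filter]
            refine and_congr_right fun hi => ?_
            have : i ∉ s := fun h => (Finset.disjoint_left.mp hdisj hi) (hsI₂ h)
            rw [if_neg this]
          rw [heq]; exact hyA
        · funext i
          by_cases hi : i ∈ I₂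
          · simp [hi, hyT i hi]
          · have : i ∉ s := fun h => hi (hsI₂ h)
            simp [hi, this]
      · intro x hx
        simp only [mem_filter] at hx
        obtain ⟨hxA, hxπ⟩ := hx
        funext i
        by_cases hi : i ∈ I₂ ∧ x i = false
        · simp [Finset.mem_filter, hi.1, hi.2]
        · have hnot : i ∉ I₂.filter fun j => x j = false := by
            simp only [Finset.mem_filter]; exact hi
          rw [if_neg hnot]
          have := congrFun hxπ i
          by_cases hi2 : i ∈ I₂
          · simp only [hi2, if_pos] at this
            rw [← this]
            rcases Bool.eq_false_or_eq_true (x i) with h | h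
            · exact h.symm
            · exact absurd ⟨hi2, h⟩ hi
          · simpa [hi2] using this.symm
      · intro s hs
        have hsI₂ := Finset.mem_powerset.mp hs
        ext i
        simp only [Finset.mem_filter]
        constructor
        · rintro ⟨hi2, hval⟩
          by_cases his : i ∈ s
          · exact his
          · rw [if_neg his, hyT i hi2] at hval
            exact absurd hval (by simp)
        · intro his
          exact ⟨hsI₂ his, by rw [if_pos his]⟩
    rw [Finset.sum_congr rfl hfiber, Finset.sum_const, smul_eq_mul, mul_comm]
  -- Step 4 : arithmetic
  have hGC : G.card + C.card = A.card := by
    rw [hG, hC, add_comm]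
    exact Finset.card_filter_add_card_filter_not _
  have hGSle : G.card ≤ S.card := Finset.card_le_card hGS
  have hnat : (2 ^ ℓ - 1) * 2 ^ n ≤ 2 ^ (ℓ + 1) * S.card := by
    have hP : 1 ≤ 2 ^ ℓ := Nat.one_le_two_pow
    obtain ⟨Q, hQ⟩ : ∃ Q, 2 ^ ℓ = Q + 1 := ⟨2 ^ ℓ - 1, by omega⟩
    have hg : G.card = Q * C.card := by
      have : G.card + C.card = (Q + 1) * C.card := by rw [← hQ, ← hfib]; exact hGC
      nlinarith [this]
    have h1 : Q * 2 ^ n ≤ Q * (2 * ((Q + 1) * C.card)) := by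
      apply Nat.mul_le_mul_left
      rw [← hQ, ← hfib]; exact hAcard
    have h2 : Q * (2 * ((Q + 1) * C.card)) = 2 * (Q + 1) * G.card := by
      rw [hg]; ring
    have h3 : 2 * (Q + 1) * G.card ≤ 2 * (Q + 1) * S.card :=
      Nat.mul_le_mul_left _ hGSle
    calc (2 ^ ℓ - 1) * 2 ^ n = Q * 2 ^ n := by rw [hQ, Nat.add_sub_cancel]
      _ ≤ 2 * (Q + 1) * S.card := le_trans h1 (h2 ▸ h3)
      _ = 2 ^ (ℓ + 1) * S.card := by rw [pow_succ, hQ]; ring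
  have hkey : ((2 : ℝ) ^ ℓ - 1) * 2 ^ n ≤ 2 ^ (ℓ + 1) * S.card := by
    have := hnat
    have h1 : ((2 ^ ℓ - 1 : ℕ) : ℝ) = (2 : ℝ) ^ ℓ - 1 := by
      push_cast [Nat.one_le_two_pow]
      ring
    calc ((2 : ℝ) ^ ℓ - 1) * 2 ^ n = (((2 ^ ℓ - 1) * 2 ^ n : ℕ) : ℝ) := by
          push_cast [h1]; ring
      _ ≤ ((2 ^ (ℓ + 1) * S.card : ℕ) : ℝ) := by exact_mod_cast hnat
      _ = 2 ^ (ℓ + 1) * S.card := by push_cast; ring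
  have hzpow : (2 : ℝ) ^ (-(2 * ρ : ℤ)) = ((2 : ℝ) ^ ℓ)⁻¹ := by
    rw [zpow_neg]
    congr 1
    rw [show ((2 * ρ : ℤ)) = (ℓ : ℤ) by omega, zpow_natCast]
  rw [hzpow, div_le_div_iff₀ (by norm_num) (by positivity)]
  have hPpos : (0 : ℝ) < 2 ^ ℓ := by positivity
  have hexp : (2 : ℝ) ^ (ℓ + 1) = 2 ^ ℓ * 2 := by rw [pow_succ]
  rw [hexp] at hkey
  have h2n : (0 : ℝ) < 2 ^ n := by positivity
  apply le_of_mul_le_mul_left _ hPpos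
  have hinv : (2:ℝ)^ℓ * (1 - ((2:ℝ)^ℓ)⁻¹) = 2^ℓ - 1 := by field_simp
  calc (2:ℝ)^ℓ * ((1 - ((2:ℝ)^ℓ)⁻¹) * 2^n) = (2^ℓ - 1) * 2^n := by
        rw [← hinv]; ring
    _ ≤ 2^ℓ * 2 * S.card := hkey
    _ = 2^ℓ * (S.card * 2) := by ring
end

section
/- Let D be an α-log-Lipschitz distribution on {0,1}^n and let φ be a conjunction of d literals (over distinct variables, not containing a complementary pair). Set η = 1/(1+α). For all 0 < ε < 1/2 and ρ ≥ 0, if d ≥ max{(4/η²)·log(1/ε), 2ρ/η}, then Pr_{x~D}[∃ y ∈ B_ρ(x) : y ⊨ φ] ≤ ε. -/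
open Finset


lemma flip_dist {n : ℕ} (i : Fin n) (x : Fin n → Bool) :
    hammingDist (Function.update x i (!(x i))) x = 1 := by
  show (univ.filter fun j => Function.update x i (!(x i)) j ≠ x j).card = 1
  have : (univ.filter fun j => Function.update x i (!(x i)) j ≠ x j) = {i} := by
    ext j
    simp only [mem_filter, mem_univ, true_and, mem_singleton, Function.update_apply]
    by_cases h : j = i <;> simp [h]
  rw [this, card_singleton]

lemma flip_flip' {n : ℕ} (i : Fin n) (x : Fin n → Bool) :
    Function.update (Function.update x i (!(x i))) i
      (!(Function.update x i (!(x i)) i)) = x := by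
  funext j
  by_cases h : j = i
  · subst h; simp
  · simp [Function.update_of_ne h]

lemma pairing {n : ℕ} (α : ℝ) (hα : 1 ≤ α)
    (D : (Fin n → Bool) → ℝ) (hpos : ∀ x, 0 < D x)
    (hlip : ∀ x x' : Fin n → Bool, hammingDist x x' = 1 → D x ≤ α * D x')
    (i : Fin n) (b : Bool) (w : (Fin n → Bool) → ℝ) (hw : ∀ x, 0 ≤ w x)
    (hinv : ∀ x, w (Function.update x i (!(x i))) = w x) :
    (1 / (1 + α)) * ∑ x : Fin n → Bool, D x * w x ≤
      ∑ x ∈ univ.filter (fun x => x i ≠ b), D x * w x := by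
  have hα0 : (0:ℝ) < 1 + α := by linarith
  set A := ∑ x ∈ univ.filter (fun x : Fin n → Bool => x i = b), D x * w x with hA
  set B := ∑ x ∈ univ.filter (fun x : Fin n → Bool => x i ≠ b), D x * w x with hB
  have htot : ∑ x : Fin n → Bool, D x * w x = A + B := by
    rw [hA, hB, sum_filter_add_sum_filter_not]
  have hAB : A ≤ α * B := by
    have : A = ∑ x ∈ univ.filter (fun x : Fin n → Bool => x i ≠ b),
        D (Function.update x i (!(x i))) * w x := by
      rw [hA]
      apply Finset.sum_nbij' (fun x => Function.update x i (!(x i)))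
        (fun x => Function.update x i (!(x i)))
      · intro a ha
        simp only [mem_filter, mem_univ, true_and] at ha ⊢
        simp [ha, Function.update_self]
      · intro a ha
        simp only [mem_filter, mem_univ, true_and] at ha ⊢
        simp only [Function.update_self]
        cases hb : a i <;> cases b <;> simp_all
      · intro a _; exact flip_flip' i a
      · intro a _; exact flip_flip' i a
      · intro a ha
        rw [flip_flip', hinv]
    rw [this, hB, Finset.mul_sum]
    apply Finset.sum_le_sum
    intro x hx
    rw [← mul_assoc]
    exact mul_le_mul_of_nonneg_right (hlip _ _ (flip_dist i x)) (hw x)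
  have hB0 : 0 ≤ B := Finset.sum_nonneg fun x _ => mul_nonneg (hpos x).le (hw x)
  rw [htot]
  rw [div_mul_eq_mul_div, one_mul, div_le_iff₀ hα0]
  nlinarith

lemma key {n d : ℕ} (α : ℝ) (hα : 1 ≤ α)
    (D : (Fin n → Bool) → ℝ) (hpos : ∀ x, 0 < D x)
    (hsum : ∑ x : Fin n → Bool, D x = 1)
    (hlip : ∀ x x' : Fin n → Bool, hammingDist x x' = 1 → D x ≤ α * D x')
    (v : Fin d → Fin n) (hv : Function.Injective v) (s : Fin d → Bool)
    (S : Finset (Fin d)) :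
    ∑ x : Fin n → Bool, D x * ∏ j ∈ S, (if x (v j) = s j then (1:ℝ) else 1/2)
      ≤ (1 - (1 / (1 + α)) / 2) ^ S.card := by
  have hα0 : (0:ℝ) < 1 + α := by linarith
  have hη0 : 0 < 1 / (1 + α) := by positivity
  have hη1 : 1 / (1 + α) ≤ 1 := by
    rw [div_le_one hα0]; linarith
  induction S using Finset.cons_induction with
  | empty => simp [hsum]
  | cons j S hj ih =>
    set η := 1 / (1 + α) with hηdef
    set c := fun x : Fin n → Bool => ∏ k ∈ S, (if x (v k) = s k then (1:ℝ) else 1/2) with hc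
    have hcnonneg : ∀ x, 0 ≤ c x := by
      intro x
      apply Finset.prod_nonneg
      intro k _
      split <;> norm_num
    have hcinv : ∀ x, c (Function.update x (v j) (!(x (v j)))) = c x := by
      intro x
      apply Finset.prod_congr rfl
      intro k hk
      have : v k ≠ v j := fun h => hj (hv h ▸ hk)
      rw [Function.update_of_ne this]
    set T := ∑ x : Fin n → Bool, D x * c x with hT
    have hsplit : ∑ x : Fin n → Bool,
        D x * ∏ k ∈ Finset.cons j S hj, (if x (v k) = s k then (1:ℝ) else 1/2)
        = T - (1/2) * ∑ x ∈ univ.filter (fun x : Fin n → Bool => x (v j) ≠ s j), D x * c x := by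
      have h1 : ∀ x : Fin n → Bool,
          D x * ∏ k ∈ Finset.cons j S hj, (if x (v k) = s k then (1:ℝ) else 1/2)
          = D x * c x - (if x (v j) ≠ s j then (1/2) * (D x * c x) else 0) := by
        intro x
        rw [Finset.prod_cons]
        by_cases h : x (v j) = s j <;> simp [h, hc] <;> ring
      rw [Finset.sum_congr rfl (fun x _ => h1 x), Finset.sum_sub_distrib]
      rw [← Finset.sum_filter, ← Finset.mul_sum]
    rw [hsplit]
    have hpair := pairing α hα D hpos hlip (v j) (s j) c hcnonneg hcinv
    have hTnn : 0 ≤ T := Finset.sum_nonneg fun x _ => mul_nonneg (hpos x).le (hcnonneg x)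
    have hstep : T - (1/2) * ∑ x ∈ univ.filter (fun x : Fin n → Bool => x (v j) ≠ s j), D x * c x
        ≤ (1 - η / 2) * T := by
      have := hpair
      nlinarith
    calc T - (1/2) * ∑ x ∈ univ.filter (fun x : Fin n → Bool => x (v j) ≠ s j), D x * c x
        ≤ (1 - η / 2) * T := hstep
      _ ≤ (1 - η / 2) * (1 - η / 2) ^ S.card := by
          apply mul_le_mul_of_nonneg_left ih
          nlinarith
      _ = (1 - η / 2) ^ (Finset.cons j S hj).card := by
          rw [Finset.card_cons, pow_succ]; ring


lemma tail (α ε : ℝ) (hα : 1 ≤ α) (hε0 : 0 < ε) (hε : ε < 1/2) (d ρ : ℕ)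
    (h1 : (4 / (1 / (1 + α)) ^ 2) * Real.log (1 / ε) ≤ (d:ℝ))
    (h2 : 2 * ρ / (1 / (1 + α)) ≤ (d:ℝ)) :
    (2:ℝ)^ρ * (1 - (1 / (1 + α)) / 2)^d ≤ ε := by
  have hα0 : (0:ℝ) < 1 + α := by linarith
  set η := 1 / (1 + α) with hηdef
  have hη0 : 0 < η := by positivity
  have hη1 : η ≤ 1/2 := by
    rw [hηdef, div_le_div_iff₀ hα0 (by norm_num)]; linarith
  have hd0 : (0:ℝ) ≤ d := Nat.cast_nonneg d
  have hρ : (ρ:ℝ) ≤ η * d / 2 := by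
    rw [div_le_iff₀ hη0] at h2; nlinarith
  have hL : Real.log (1/ε) ≤ η^2 * d / 4 := by
    have h4 : (0:ℝ) < 4 / η^2 := by positivity
    rw [div_mul_eq_mul_div, div_le_iff₀ (by positivity : (0:ℝ) < η^2)] at h1
    nlinarith
  have hlogeps : Real.log (1/ε) = - Real.log ε := by rw [one_div, Real.log_inv]
  have hb1 : 1 - η/2 ≤ Real.exp (-(η/2)) := by
    have := Real.add_one_le_exp (-(η/2)); linarith
  have hb1' : (1 - η/2)^d ≤ Real.exp (-(η/2))^d :=
    pow_le_pow_left₀ (by linarith) hb1 d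
  have hb2 : (2:ℝ)^ρ = Real.exp ((ρ:ℝ) * Real.log 2) := by
    rw [Real.exp_nat_mul, Real.exp_log (by norm_num : (0:ℝ) < 2)]
  have hb3 : Real.exp (-(η/2))^d = Real.exp ((d:ℝ) * (-(η/2))) := by
    rw [Real.exp_nat_mul]
  have hexp : (ρ:ℝ) * Real.log 2 + (d:ℝ) * (-(η/2)) ≤ Real.log ε := by
    have e1 : (ρ:ℝ) * Real.log 2 ≤ (η * d / 2) * Real.log 2 :=
      mul_le_mul_of_nonneg_right hρ (Real.log_nonneg one_le_two)
    have e2 : η/2 ≤ 1 - Real.log 2 := by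
      have := Real.log_two_lt_d9; linarith
    have e3 : (η * d / 2) * (η/2) ≤ (η * d / 2) * (1 - Real.log 2) :=
      mul_le_mul_of_nonneg_left e2 (by positivity)
    nlinarith
  calc (2:ℝ)^ρ * (1 - η/2)^d
      ≤ (2:ℝ)^ρ * Real.exp (-(η/2))^d := by
        apply mul_le_mul_of_nonneg_left hb1' (by positivity)
    _ = Real.exp ((ρ:ℝ) * Real.log 2 + (d:ℝ) * (-(η/2))) := by
        rw [hb2, hb3, ← Real.exp_add]
    _ ≤ Real.exp (Real.log ε) := Real.exp_le_exp.mpr hexp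
    _ = ε := Real.exp_log hε0


theorem stmt_8 (n d : ℕ) (α : ℝ) (hα : 1 ≤ α)
    (D : (Fin n → Bool) → ℝ) (hpos : ∀ x, 0 < D x)
    (hsum : ∑ x : Fin n → Bool, D x = 1)
    (hlip : ∀ x x' : Fin n → Bool, hammingDist x x' = 1 → D x ≤ α * D x')
    (v : Fin d → Fin n) (hv : Function.Injective v) (s : Fin d → Bool)
    (ε : ℝ) (hε0 : 0 < ε) (hε : ε < 1 / 2) (ρ : ℕ)
    (hd : max ((4 / (1 / (1 + α)) ^ 2) * Real.log (1 / ε)) (2 * ρ / (1 / (1 + α))) ≤ (d : ℝ)) :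
    ∑ x ∈ univ.filter (fun x : Fin n → Bool =>
        ∃ y : Fin n → Bool, hammingDist x y ≤ ρ ∧ ∀ j : Fin d, y (v j) = s j), D x ≤ ε := by
  have hα0 : (0:ℝ) < 1 + α := by linarith
  set η := 1 / (1 + α) with hηdef
  set c := fun x : Fin n → Bool => ∏ j : Fin d, (if x (v j) = s j then (1:ℝ) else 1/2) with hc
  have hcnonneg : ∀ x, 0 ≤ c x := by
    intro x; apply Finset.prod_nonneg; intro k _; split <;> norm_num
  -- for x in the event, c x ≥ (1/2)^ρ
  have hmem : ∀ x : Fin n → Bool,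
      (∃ y : Fin n → Bool, hammingDist x y ≤ ρ ∧ ∀ j : Fin d, y (v j) = s j) →
      ((1:ℝ)/2)^ρ ≤ c x := by
    intro x ⟨y, hdist, hy⟩
    have hcard : (univ.filter fun j : Fin d => ¬ (x (v j) = s j)).card ≤ ρ := by
      have hsub : ∀ j ∈ (univ.filter fun j : Fin d => ¬ (x (v j) = s j)),
          v j ∈ (univ.filter fun i : Fin n => x i ≠ y i) := by
        intro j hj
        simp only [mem_filter, mem_univ, true_and] at hj ⊢
        rw [hy j]; exact hj
      have := Finset.card_le_card_of_injOn v hsub (fun a _ b _ h => hv h)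
      exact le_trans this hdist
    have hprod : c x = ((1:ℝ)/2) ^ (univ.filter fun j : Fin d => ¬ (x (v j) = s j)).card := by
      simp only [hc]
      rw [Finset.prod_ite]
      simp [Finset.prod_const]
    rw [hprod]
    exact pow_le_pow_of_le_one (by norm_num) (by norm_num) hcard
  have hkey := key α hα D hpos hsum hlip v hv s Finset.univ
  rw [Finset.card_univ, Fintype.card_fin] at hkey
  have htail := tail α ε hα hε0 hε d ρ (le_trans (le_max_left _ _) hd)
    (le_trans (le_max_right _ _) hd)
  calc ∑ x ∈ univ.filter (fun x : Fin n → Bool =>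
        ∃ y : Fin n → Bool, hammingDist x y ≤ ρ ∧ ∀ j : Fin d, y (v j) = s j), D x
      ≤ ∑ x ∈ univ.filter (fun x : Fin n → Bool =>
        ∃ y : Fin n → Bool, hammingDist x y ≤ ρ ∧ ∀ j : Fin d, y (v j) = s j),
          (2:ℝ)^ρ * (D x * c x) := by
        apply Finset.sum_le_sum
        intro x hx
        simp only [mem_filter, mem_univ, true_and] at hx
        have h1 : ((1:ℝ)/2)^ρ ≤ c x := hmem x hx
        have h2 : (1:ℝ) ≤ (2:ℝ)^ρ * c x := by
          have : (2:ℝ)^ρ * ((1:ℝ)/2)^ρ = 1 := by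
            rw [← mul_pow]; norm_num
          nlinarith [pow_pos (show (0:ℝ) < 2 by norm_num) ρ]
        nlinarith [(hpos x).le, hpos x]
    _ = (2:ℝ)^ρ * ∑ x ∈ univ.filter (fun x : Fin n → Bool =>
        ∃ y : Fin n → Bool, hammingDist x y ≤ ρ ∧ ∀ j : Fin d, y (v j) = s j), D x * c x := by
        rw [Finset.mul_sum]
    _ ≤ (2:ℝ)^ρ * ∑ x : Fin n → Bool, D x * c x := by
        apply mul_le_mul_of_nonneg_left _ (by positivity)
        apply Finset.sum_le_sum_of_subset_of_nonneg (Finset.filter_subset _ _)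
        intro x _ _
        exact mul_nonneg (hpos x).le (hcnonneg x)
    _ ≤ (2:ℝ)^ρ * (1 - η / 2)^d := by
        apply mul_le_mul_of_nonneg_left hkey (by positivity)
    _ ≤ ε := htail
end

section
/- Let h and c be two 1-decision lists on {0,1}^n (in minimal representation) and let D be an α-log-Lipschitz distribution. If Pr_{x~D}[h(x) ≠ c(x)] < (1+α)^{−2d}, then h and c are consistent up to depth d, meaning h(x) = c(x) for all x that activate a node of level at most d in both lists. -/
open Finset

/-- Evaluation of a 1-decision list given by a list of (literal, value) pairs
and a default value: output the value of the first node whose literal is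
satisfied by `x`, or the default value if none is. A literal is a pair
`(i, s)` which is satisfied by `x` iff `x i = s`. -/
def evalDL {n : ℕ} : List ((Fin n × Bool) × Bool) → Bool → (Fin n → Bool) → Bool
  | [], dflt, _ => dflt
  | (l, v) :: rest, dflt, x => if x l.1 = l.2 then v else evalDL rest dflt x

/-- The level of the node activated by `x` in a 1-decision list: the
(1-indexed) position of the first node whose literal is satisfied by `x`;
the default node counts as the node following the whole list. -/
def actDepth {n : ℕ} : List ((Fin n × Bool) × Bool) → (Fin n → Bool) → ℕ
  | [], _ => 1
  | (l, _) :: rest, x => if x l.1 = l.2 then 1 else actDepth rest x + 1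

/-- Relevant variables: variables of the literals up to (and including) the
first satisfied one. -/
def rvars {n : ℕ} : List ((Fin n × Bool) × Bool) → (Fin n → Bool) → Finset (Fin n)
  | [], _ => ∅
  | (l, _) :: rest, x => insert l.1 (if x l.1 = l.2 then ∅ else rvars rest x)

lemma rvars_card_le {n : ℕ} (L : List ((Fin n × Bool) × Bool)) (x : Fin n → Bool) :
    (rvars L x).card ≤ actDepth L x := by
  induction L with
  | nil => simp [rvars, actDepth]
  | cons p rest ih =>
    obtain ⟨l, v⟩ := p
    by_cases h : x l.1 = l.2
    · simp [rvars, actDepth, h]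
    · simp only [rvars, actDepth, h, if_neg, if_false]
      calc (insert l.1 (rvars rest x)).card ≤ (rvars rest x).card + 1 :=
            Finset.card_insert_le _ _
        _ ≤ actDepth rest x + 1 := by omega

lemma eval_agree {n : ℕ} (L : List ((Fin n × Bool) × Bool)) (dflt : Bool)
    (x y : Fin n → Bool) (h : ∀ i ∈ rvars L x, y i = x i) :
    evalDL L dflt y = evalDL L dflt x := by
  induction L with
  | nil => rfl
  | cons p rest ih =>
    obtain ⟨l, v⟩ := p
    have hy : y l.1 = x l.1 := h l.1 (by simp [rvars])
    by_cases hx : x l.1 = l.2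
    · simp [evalDL, hx, hy]
    · have hy' : ¬ y l.1 = l.2 := by rw [hy]; exact hx
      simp only [evalDL, hx, hy', if_neg, if_false]
      exact ih (fun i hi => h i (by simp [rvars, hx]; right; exact hi))

lemma update_dist {n : ℕ} (z : Fin n → Bool) (i : Fin n) (b : Bool) (hb : b ≠ z i) :
    hammingDist (Function.update z i b) z = 1 := by
  unfold hammingDist
  rw [Finset.card_eq_one]
  refine ⟨i, ?_⟩
  ext j
  simp only [Finset.mem_filter, Finset.mem_univ, true_and, Finset.mem_singleton]
  constructor
  · intro hj
    by_contra hji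
    simp [Function.update_of_ne hji] at hj
  · intro hj; subst hj; simpa using hb

lemma sum_agree {n : ℕ} (α : ℝ) (hα : 1 ≤ α)
    (D : (Fin n → Bool) → ℝ) (hpos : ∀ x, 0 < D x)
    (hsum : ∑ x : Fin n → Bool, D x = 1)
    (hlip : ∀ x x' : Fin n → Bool, hammingDist x x' = 1 → D x ≤ α * D x')
    (S : Finset (Fin n)) (x : Fin n → Bool) :
    (1 + α) ^ (-(S.card : ℤ)) ≤
      ∑ y ∈ univ.filter (fun y : Fin n → Bool => ∀ i ∈ S, y i = x i), D y := by
  have hb : (0:ℝ) < 1 + α := by linarith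
  induction S using Finset.induction_on with
  | empty => simp [hsum]
  | @insert i S' hiS ih =>
    set T := univ.filter (fun y : Fin n → Bool => ∀ j ∈ insert i S', y j = x j) with hT
    set T' := univ.filter (fun y : Fin n → Bool => ∀ j ∈ S', y j = x j) with hT'
    have key : ∑ y ∈ T', D y ≤ (1 + α) * ∑ y ∈ T, D y := by
      have hsplit : ∑ y ∈ T', D y
          = ∑ y ∈ T'.filter (fun y => y i = x i), D y
            + ∑ y ∈ T'.filter (fun y => ¬ y i = x i), D y :=
        (Finset.sum_filter_add_sum_filter_not _ _ _).symm
      have hTeq : T'.filter (fun y => y i = x i) = T := by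
        ext y
        simp only [hT, hT', Finset.mem_filter, Finset.mem_univ, true_and,
          Finset.forall_mem_insert]
        tauto
      have hbij : ∑ y ∈ T'.filter (fun y => ¬ y i = x i), D y
          = ∑ z ∈ T, D (Function.update z i (!(x i))) := by
        apply Finset.sum_nbij' (i := fun y => Function.update y i (x i))
          (j := fun z => Function.update z i (!(x i)))
        · intro y hy
          simp only [hT', Finset.mem_filter, Finset.mem_univ, true_and] at hy
          simp only [hT, Finset.mem_filter, Finset.mem_univ, true_and,
            Finset.forall_mem_insert]
          refine ⟨Function.update_self _ _ _, fun j hj => ?_⟩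
          have hji : j ≠ i := fun h => hiS (h ▸ hj)
          rw [Function.update_of_ne hji]
          exact hy.1 j hj
        · intro z hz
          simp only [hT, Finset.mem_filter, Finset.mem_univ, true_and,
            Finset.forall_mem_insert] at hz
          simp only [hT', Finset.mem_filter, Finset.mem_univ, true_and]
          constructor
          · intro j hj
            have hji : j ≠ i := fun h => hiS (h ▸ hj)
            rw [Function.update_of_ne hji]
            exact hz.2 j hj
          · simp
        · intro y hy
          simp only [hT', Finset.mem_filter, Finset.mem_univ, true_and] at hy
          funext j
          by_cases hji : j = i
          · subst hji
            simp only [Function.update_self]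
            cases h : y j
            · cases h2 : x j
              · exact absurd (h.trans h2.symm) hy.2
              · simp [h2]
            · cases h2 : x j
              · simp [h2]
              · exact absurd (h.trans h2.symm) hy.2
          · simp [Function.update_of_ne hji]
        · intro z hz
          simp only [hT, Finset.mem_filter, Finset.mem_univ, true_and,
            Finset.forall_mem_insert] at hz
          funext j
          by_cases hji : j = i
          · subst hji
            simp [Function.update_self, hz.1]
          · simp [Function.update_of_ne hji]
        · intro y hy
          congr 1
          funext j
          by_cases hji : j = i
          · subst hji
            simp only [hT', Finset.mem_filter, Finset.mem_univ, true_and] at hy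
            simp only [Function.update_self]
            cases h : y j
            · cases h2 : x j
              · exact absurd (h.trans h2.symm) hy.2
              · rfl
            · cases h2 : x j
              · rfl
              · exact absurd (h.trans h2.symm) hy.2
          · simp [Function.update_of_ne hji]
      have hflip : ∑ z ∈ T, D (Function.update z i (!(x i)))
          ≤ ∑ z ∈ T, α * D z := by
        apply Finset.sum_le_sum
        intro z hz
        simp only [hT, Finset.mem_filter, Finset.mem_univ, true_and,
          Finset.forall_mem_insert] at hz
        apply hlip
        apply update_dist
        rw [hz.1]
        simp
      rw [hsplit, hTeq, hbij]
      have := hflip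
      rw [← Finset.mul_sum] at this
      linarith
    have hcard : ((insert i S').card : ℤ) = (S'.card : ℤ) + 1 := by
      rw [Finset.card_insert_of_notMem hiS]; push_cast; ring
    have hstep : (1 + α) ^ (-((insert i S').card : ℤ))
        = (1 + α) ^ (-(S'.card : ℤ)) / (1 + α) := by
      rw [hcard]
      rw [show -((S'.card : ℤ) + 1) = -(S'.card : ℤ) - 1 by ring]
      rw [zpow_sub₀ (ne_of_gt hb)]
      simp
    rw [hstep]
    rw [div_le_iff₀ hb]
    calc (1 + α) ^ (-(S'.card : ℤ)) ≤ ∑ y ∈ T', D y := ih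
      _ ≤ (1 + α) * ∑ y ∈ T, D y := key
      _ = (∑ y ∈ T, D y) * (1 + α) := by ring

theorem stmt_9 (n d : ℕ) (α : ℝ) (hα : 1 ≤ α)
    (D : (Fin n → Bool) → ℝ) (hpos : ∀ x, 0 < D x)
    (hsum : ∑ x : Fin n → Bool, D x = 1)
    (hlip : ∀ x x' : Fin n → Bool, hammingDist x x' = 1 → D x ≤ α * D x')
    (Lh Lc : List ((Fin n × Bool) × Bool)) (dh dc : Bool)
    (hminh : (Lh.map (fun p => p.1.1)).Nodup)
    (hminc : (Lc.map (fun p => p.1.1)).Nodup)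
    (herr : ∑ x ∈ univ.filter
        (fun x : Fin n → Bool => evalDL Lh dh x ≠ evalDL Lc dc x), D x
      < (1 + α) ^ (-(2 * d : ℤ))) :
    ∀ x : Fin n → Bool, actDepth Lh x ≤ d → actDepth Lc x ≤ d →
      evalDL Lh dh x = evalDL Lc dc x := by
  intro x hdh hdc
  by_contra hne
  set S := rvars Lh x ∪ rvars Lc x with hS
  have hcard : S.card ≤ 2 * d := by
    calc S.card ≤ (rvars Lh x).card + (rvars Lc x).card := Finset.card_union_le _ _
      _ ≤ actDepth Lh x + actDepth Lc x := by
          have := rvars_card_le Lh x; have := rvars_card_le Lc x; omega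
      _ ≤ 2 * d := by omega
  have hsub : univ.filter (fun y : Fin n → Bool => ∀ i ∈ S, y i = x i)
      ⊆ univ.filter (fun y : Fin n → Bool => evalDL Lh dh y ≠ evalDL Lc dc y) := by
    intro y hy
    simp only [Finset.mem_filter, Finset.mem_univ, true_and] at hy ⊢
    have h1 : evalDL Lh dh y = evalDL Lh dh x :=
      eval_agree _ _ _ _ (fun i hi => hy i (Finset.mem_union_left _ hi))
    have h2 : evalDL Lc dc y = evalDL Lc dc x :=
      eval_agree _ _ _ _ (fun i hi => hy i (Finset.mem_union_right _ hi))
    rw [h1, h2]; exact hne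
  have hmono : (1 + α) ^ (-(2 * d : ℤ)) ≤ (1 + α) ^ (-(S.card : ℤ)) := by
    apply zpow_le_zpow_right₀ (by linarith : (1:ℝ) ≤ 1 + α)
    omega
  have h1 := sum_agree α hα D hpos hsum hlip S x
  have h2 : ∑ y ∈ univ.filter (fun y : Fin n → Bool => ∀ i ∈ S, y i = x i), D y
      ≤ ∑ y ∈ univ.filter
        (fun y : Fin n → Bool => evalDL Lh dh y ≠ evalDL Lc dc y), D y :=
    Finset.sum_le_sum_of_subset_of_nonneg hsub (fun i _ _ => (hpos i).le)
  linarith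
end

section
/- Let φ be a CNF formula (a set of clauses, each a set of literals) that is closed under resolution. Then any minimal cover C of φ (a minimal set of literals such that every clause of φ contains a literal of C) is satisfiable as a set of literals, i.e., C does not contain both a variable and its negation. -/
theorem stmt_10 (n : ℕ) (φ : Finset (Finset (Fin n × Bool)))
    (hres : ∀ K₁ ∈ φ, ∀ K₂ ∈ φ, ∀ p : Fin n × Bool,
      p ∈ K₁ → (p.1, !p.2) ∈ K₂ → (K₁.erase p ∪ K₂.erase (p.1, !p.2)) ∈ φ)
    (C : Finset (Fin n × Bool))
    (hcov : ∀ K ∈ φ, ∃ l ∈ K, l ∈ C)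
    (hmin : ∀ C' ⊂ C, ¬ (∀ K ∈ φ, ∃ l ∈ K, l ∈ C')) :
    ∀ i : Fin n, ¬ ((i, true) ∈ C ∧ (i, false) ∈ C) := by
  rintro i ⟨ht, hf⟩
  have h1 := hmin (C.erase (i, true)) (Finset.erase_ssubset ht)
  have h2 := hmin (C.erase (i, false)) (Finset.erase_ssubset hf)
  push_neg at h1 h2
  obtain ⟨K₁, hK₁, hK₁'⟩ := h1
  obtain ⟨K₂, hK₂, hK₂'⟩ := h2
  -- every literal of K₁ in C is (i,true)
  have hK₁c : ∀ l ∈ K₁, l ∈ C → l = (i, true) := by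
    intro l hl hlC
    by_contra h
    exact hK₁' l hl (Finset.mem_erase.mpr ⟨h, hlC⟩)
  have hK₂c : ∀ l ∈ K₂, l ∈ C → l = (i, false) := by
    intro l hl hlC
    by_contra h
    exact hK₂' l hl (Finset.mem_erase.mpr ⟨h, hlC⟩)
  obtain ⟨l₁, hl₁, hl₁C⟩ := hcov K₁ hK₁
  obtain ⟨l₂, hl₂, hl₂C⟩ := hcov K₂ hK₂
  have e₁ := hK₁c l₁ hl₁ hl₁C; subst e₁
  have e₂ := hK₂c l₂ hl₂ hl₂C; subst e₂
  have hR := hres K₁ hK₁ K₂ hK₂ (i, true) hl₁ (by simpa using hl₂)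
  obtain ⟨l, hl, hlC⟩ := hcov _ hR
  rcases Finset.mem_union.mp hl with h | h
  · obtain ⟨hne, hmem⟩ := Finset.mem_erase.mp h
    exact hne (hK₁c l hmem hlC)
  · obtain ⟨hne, hmem⟩ := Finset.mem_erase.mp h
    have := hK₂c l hmem hlC
    simp at hne
    exact hne (by simpa using this)
end

section
/- Let M be a variable-disjoint matching of d disjunctive clauses, each with at most k literals, over variables x_1,…,x_n, and let Φ : {0,1}^n → {0,1}^d map x to the vector of truth values of the d clauses under x. If D is an α-log-Lipschitz distribution on {0,1}^n, then the pushforward distribution D' on {0,1}^d defined by D'(y) = Σ_{x ∈ Φ^{−1}(y)} D(x) is α'-log-Lipschitz for α' = (α+1)^k − 1. -/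
open Finset

lemma lip_pow {n : ℕ} {α : ℝ} (hα : 1 ≤ α) (D : (Fin n → Bool) → ℝ)
    (hpos : ∀ x, 0 < D x)
    (hlip : ∀ x x', hammingDist x x' = 1 → D x ≤ α * D x') :
    ∀ t (x z : Fin n → Bool), hammingDist x z = t → D x ≤ α ^ t * D z := by
  intro t
  induction t with
  | zero =>
    intro x z h
    rw [hammingDist_eq_zero.mp h]; simp
  | succ t ih =>
    intro x z h
    have hxz : x ≠ z := by
      intro he; rw [he, hammingDist_self] at h; omega
    obtain ⟨i, hi⟩ : ∃ i, x i ≠ z i := by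
      by_contra hc
      push_neg at hc
      exact hxz (funext hc)
    set x₁ := Function.update x i (z i) with hx₁
    have h1 : hammingDist x x₁ = 1 := by
      have : ({j | x j ≠ x₁ j} : Finset (Fin n)) = {i} := by
        ext j
        by_cases hj : j = i <;> simp [hx₁, Function.update, hj, hi]
      rw [hammingDist, this, card_singleton]
    have h2 : hammingDist x₁ z = t := by
      have he : ({j | x₁ j ≠ z j} : Finset (Fin n))
          = ({j | x j ≠ z j} : Finset (Fin n)).erase i := by
        ext j
        by_cases hj : j = i <;> simp [hx₁, Function.update, hj]
      have hmem : i ∈ ({j | x j ≠ z j} : Finset (Fin n)) := by simp [hi]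
      have := Finset.card_erase_of_mem hmem
      rw [hammingDist, he, this, ← hammingDist, h]; omega
    calc D x ≤ α * D x₁ := hlip _ _ h1
      _ ≤ α * (α ^ t * D z) := by
          have := ih x₁ z h2
          nlinarith [hpos x₁, hpos z]
      _ = α ^ (t + 1) * D z := by ring

lemma cube_sum {n : ℕ} (S : Finset (Fin n)) (α : ℝ) :
    ∑ T ∈ S.powerset, α ^ T.card = (α + 1) ^ S.card := by
  have := Finset.prod_add (fun _ : Fin n => α) (fun _ => (1:ℝ)) S
  simp only [Finset.prod_const, Finset.prod_const_one, mul_one] at this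
  simp only [one_pow, mul_one] at this; rw [this]

theorem stmt_11 (n d k : ℕ) (α : ℝ) (hα : 1 ≤ α)
    (D : (Fin n → Bool) → ℝ) (hpos : ∀ x, 0 < D x)
    (hsum : ∑ x : Fin n → Bool, D x = 1)
    (hlip : ∀ x x' : Fin n → Bool, hammingDist x x' = 1 → D x ≤ α * D x')
    (M : Fin d → Finset (Fin n × Bool))
    (hne : ∀ j, (M j).Nonempty)
    (hk : ∀ j, (M j).card ≤ k)
    (hinj : ∀ j, ∀ l₁ ∈ M j, ∀ l₂ ∈ M j, l₁.1 = l₂.1 → l₁ = l₂)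
    (hdisj : ∀ j j' : Fin d, j ≠ j' → ∀ l₁ ∈ M j, ∀ l₂ ∈ M j', l₁.1 ≠ l₂.1) :
    ∀ y y' : Fin d → Bool, hammingDist y y' = 1 →
      (∑ x ∈ univ.filter (fun x : Fin n → Bool =>
          ∀ j : Fin d, (decide (∃ l ∈ M j, x l.1 = l.2)) = y j), D x)
      ≤ ((α + 1) ^ k - 1) *
        ∑ x ∈ univ.filter (fun x : Fin n → Bool =>
          ∀ j : Fin d, (decide (∃ l ∈ M j, x l.1 = l.2)) = y' j), D x := by
  classical
  intro y y' hd
  obtain ⟨j₀, hj₀⟩ : ∃ j₀, ({j | y j ≠ y' j} : Finset (Fin d)) = {j₀} :=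
    Finset.card_eq_one.mp hd
  have hyy : ∀ j, y j ≠ y' j ↔ j = j₀ := by
    intro j
    rw [← Finset.mem_singleton, ← hj₀]; simp
  have hj0ne : y j₀ ≠ y' j₀ := (hyy j₀).mpr rfl
  have hagree : ∀ j, j ≠ j₀ → y j = y' j := by
    intro j hj; by_contra hc; exact hj ((hyy j).mp hc)
  set S : Finset (Fin n) := (M j₀).image Prod.fst with hS
  have hScard : S.card ≤ k := le_trans Finset.card_image_le (hk j₀)
  have hmemS : ∀ l ∈ M j₀, l.1 ∈ S := fun l hl => Finset.mem_image_of_mem _ hl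
  -- falsifying value on the variables of clause j₀
  set fv : Fin n → Bool := fun i => decide ((i, false) ∈ M j₀) with hfv
  have hfvval : ∀ l ∈ M j₀, fv l.1 ≠ l.2 := by
    intro l hl
    cases hb : l.2 with
    | false =>
      have hmem : (l.1, false) ∈ M j₀ := by
        have : (l.1, false) = l := by rw [← hb]
        rwa [this]
      simp [hfv, hmem, hb]
    | true =>
      have : (l.1, false) ∉ M j₀ := by
        intro h'
        have := hinj j₀ l hl (l.1, false) h' rfl
        rw [this] at hb; simp at hb
      simp [hfv, this, hb]
  obtain ⟨l₀, hl₀⟩ := hne j₀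
  -- the retraction map
  set r : (Fin n → Bool) → (Fin n → Bool) := fun x i =>
    if y' j₀ = true ∧ i = l₀.1 then l₀.2 else if i ∈ S then fv i else x i with hr
  have P1 : ∀ x i, i ∉ S → r x i = x i := by
    intro x i hiS
    have : i ≠ l₀.1 := fun h => hiS (h ▸ hmemS l₀ hl₀)
    simp [hr, this, hiS]
  have P2 : ∀ x, ∀ j, j ≠ j₀ →
      (decide (∃ l ∈ M j, r x l.1 = l.2)) = (decide (∃ l ∈ M j, x l.1 = l.2)) := by
    intro x j hj
    have hvar : ∀ l ∈ M j, r x l.1 = x l.1 := by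
      intro l hl
      apply P1
      intro hmem
      obtain ⟨l', hl', he⟩ := Finset.mem_image.mp hmem
      exact hdisj j j₀ hj l hl l' hl' he.symm
    rw [decide_eq_decide]
    constructor
    · rintro ⟨l, hl, hv⟩; exact ⟨l, hl, (hvar l hl) ▸ hv⟩
    · rintro ⟨l, hl, hv⟩; exact ⟨l, hl, (hvar l hl).symm ▸ hv⟩
  have P3 : ∀ x, (decide (∃ l ∈ M j₀, r x l.1 = l.2)) = y' j₀ := by
    intro x
    cases hy' : y' j₀ with
    | true =>
      apply decide_eq_true
      refine ⟨l₀, hl₀, ?_⟩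
      simp [hr, hy']
    | false =>
      apply decide_eq_false
      rintro ⟨l, hl, hv⟩
      have : r x l.1 = fv l.1 := by simp [hr, hy', hmemS l hl]
      rw [this] at hv
      exact hfvval l hl hv
  have hmaps : ∀ x ∈ univ.filter (fun x : Fin n → Bool =>
      ∀ j : Fin d, (decide (∃ l ∈ M j, x l.1 = l.2)) = y j),
      r x ∈ univ.filter (fun x : Fin n → Bool =>
      ∀ j : Fin d, (decide (∃ l ∈ M j, x l.1 = l.2)) = y' j) := by
    intro x hx
    rw [Finset.mem_filter] at hx ⊢
    refine ⟨Finset.mem_univ _, fun j => ?_⟩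
    by_cases hj : j = j₀
    · rw [hj]; exact P3 x
    · rw [P2 x j hj, hx.2 j, hagree j hj]
  rw [← Finset.sum_fiberwise_of_maps_to hmaps D, Finset.mul_sum]
  apply Finset.sum_le_sum
  intro z hz
  -- fiber bound
  set fiber := (univ.filter (fun x : Fin n → Bool =>
      ∀ j : Fin d, (decide (∃ l ∈ M j, x l.1 = l.2)) = y j)).filter
      (fun x => r x = z) with hfib
  have hoff : ∀ x ∈ fiber, ∀ i, i ∉ S → x i = z i := by
    intro x hx i hiS
    rw [hfib, Finset.mem_filter] at hx
    rw [← hx.2, P1 x i hiS]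
  have hxz : ∀ x ∈ fiber, x ≠ z := by
    intro x hx he
    rw [hfib, Finset.mem_filter, Finset.mem_filter] at hx
    rw [Finset.mem_filter] at hz
    have h1 := hx.1.2 j₀
    have h2 := hz.2 j₀
    rw [he, h2] at h1
    exact hj0ne h1.symm
  set Tm : (Fin n → Bool) → Finset (Fin n) := fun x => {i | x i ≠ z i} with hTm
  have hTcard : ∀ x, hammingDist x z = (Tm x).card := fun x => rfl
  have hTsub : ∀ x ∈ fiber, Tm x ∈ (S.powerset).erase ∅ := by
    intro x hx
    rw [Finset.mem_erase, Finset.mem_powerset]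
    constructor
    · intro he
      apply hxz x hx
      funext i
      by_contra hc
      have : i ∈ Tm x := by simp [hTm, hc]
      rw [he] at this; simp at this
    · intro i hi
      rw [hTm] at hi; simp only [Finset.mem_filter, Finset.mem_univ, true_and] at hi
      by_contra hiS
      exact hi (hoff x hx i hiS)
  have hbool : ∀ a b c : Bool, a ≠ c → b ≠ c → a = b := by decide
  have hTinj : ∀ x ∈ fiber, ∀ x' ∈ fiber, Tm x = Tm x' → x = x' := by
    intro x hx x' hx' hT
    funext i
    by_cases hiS : i ∈ S
    · by_cases hxi : x i = z i
      · have hni : i ∉ Tm x := by simp [hTm, hxi]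
        rw [hT] at hni
        simp only [hTm, Finset.mem_filter, Finset.mem_univ, true_and, not_not] at hni
        rw [hxi, hni]
      · have hni : i ∈ Tm x := by simp [hTm, hxi]
        rw [hT] at hni
        simp only [hTm, Finset.mem_filter, Finset.mem_univ, true_and] at hni
        exact hbool _ _ _ hxi hni
    · rw [hoff x hx i hiS, hoff x' hx' i hiS]
  calc ∑ x ∈ fiber, D x
      ≤ ∑ x ∈ fiber, α ^ (Tm x).card * D z := by
        apply Finset.sum_le_sum
        intro x _
        exact lip_pow hα D hpos hlip ((Tm x).card) x z (hTcard x)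
    _ = (∑ x ∈ fiber, α ^ (Tm x).card) * D z := by rw [Finset.sum_mul]
    _ ≤ (∑ T ∈ (S.powerset).erase ∅, α ^ T.card) * D z := by
        apply mul_le_mul_of_nonneg_right _ (le_of_lt (hpos z))
        have himg : ∑ T ∈ fiber.image Tm, α ^ T.card = ∑ x ∈ fiber, α ^ (Tm x).card :=
          Finset.sum_image (fun x hx x' hx' => hTinj x hx x' hx')
        rw [← himg]
        apply Finset.sum_le_sum_of_subset_of_nonneg
        · intro T hT
          obtain ⟨x, hx, he⟩ := Finset.mem_image.mp hT
          exact he ▸ hTsub x hx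
        · intro T _ _
          positivity
    _ = ((α + 1) ^ S.card - 1) * D z := by
        have := Finset.sum_erase_add (S.powerset) (fun T => α ^ T.card)
          (Finset.empty_mem_powerset S)
        rw [cube_sum] at this
        simp only [Finset.card_empty, pow_zero] at this
        have he : ∑ T ∈ (S.powerset).erase ∅, α ^ T.card = (α + 1) ^ S.card - 1 := by
          linarith
        rw [he]
    _ ≤ ((α + 1) ^ k - 1) * D z := by
        apply mul_le_mul_of_nonneg_right _ (le_of_lt (hpos z))
        have h1 : (α + 1) ^ S.card ≤ (α + 1) ^ k :=
          pow_le_pow_right₀ (by linarith) hScard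
        linarith
end

section
/- Let PARITIES be the class of parity functions f_I(x) = (Σ_{i∈I} x_i) mod 2 for I ⊆ [n], and let D be an α-log-Lipschitz distribution on {0,1}^n. Then for any two distinct parity functions f_I ≠ f_J, Pr_{x~D}[f_I(x) ≠ f_J(x)] ≥ 1/(1+α). -/
open Finset

theorem stmt_13 (n : ℕ) (α : ℝ) (hα : 1 ≤ α)
    (D : (Fin n → Bool) → ℝ) (hpos : ∀ x, 0 < D x)
    (hsum : ∑ x : Fin n → Bool, D x = 1)
    (hlip : ∀ x x' : Fin n → Bool, hammingDist x x' = 1 → D x ≤ α * D x')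
    (I J : Finset (Fin n)) (hIJ : I ≠ J) :
    1 / (1 + α) ≤
      ∑ x ∈ univ.filter (fun x : Fin n → Bool =>
        (I.filter (fun i => x i = true)).card % 2 ≠
        (J.filter (fun i => x i = true)).card % 2), D x := by
  classical
  -- find a coordinate in the symmetric difference
  have hex : ∃ k, ((k ∈ I) ∧ k ∉ J) ∨ ((k ∈ J) ∧ k ∉ I) := by
    by_contra h
    push_neg at h
    apply hIJ
    ext a
    have := h a
    tauto
  obtain ⟨k, hk⟩ := hex
  set flip : (Fin n → Bool) → (Fin n → Bool) :=
    fun x => Function.update x k (!x k) with hflipdef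
  have hflipk : ∀ x, flip x k = !x k := by
    intro x; simp [hflipdef]
  have hflipne : ∀ x i, i ≠ k → flip x i = x i := by
    intro x i hi; simp [hflipdef, Function.update_of_ne hi]
  have hflipflip : ∀ x, flip (flip x) = x := by
    intro x
    funext i
    by_cases hi : i = k
    · subst hi; simp [hflipk]
    · rw [hflipne _ _ hi, hflipne _ _ hi]
  -- parity lemma
  have hpar : ∀ (K : Finset (Fin n)) (x : Fin n → Bool),
      ((K.filter (fun i => flip x i = true)).card : ZMod 2)
        = ((K.filter (fun i => x i = true)).card : ZMod 2)
          + (if k ∈ K then 1 else 0) := by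
    intro K x
    rw [Finset.card_filter, Finset.card_filter, Nat.cast_sum, Nat.cast_sum]
    by_cases hkK : k ∈ K
    · rw [if_pos hkK]
      rw [← Finset.sum_erase_add _ _ hkK, ← Finset.sum_erase_add _ _ hkK]
      have h1 : ∀ i ∈ K.erase k,
          ((if flip x i = true then 1 else 0 : ℕ) : ZMod 2)
            = ((if x i = true then 1 else 0 : ℕ) : ZMod 2) := by
        intro i hi
        rw [hflipne _ _ (Finset.mem_erase.mp hi).1]
      rw [Finset.sum_congr rfl h1]
      rw [add_assoc]
      congr 1
      rw [hflipk]
      cases hxk : x k <;> simp <;> decide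
    · rw [if_neg hkK, add_zero]
      apply Finset.sum_congr rfl
      intro i hi
      rw [hflipne _ _ (fun h => hkK (h ▸ hi))]
  -- the condition as ZMod 2
  set P : (Fin n → Bool) → Prop := fun x =>
    (I.filter (fun i => x i = true)).card % 2 ≠
    (J.filter (fun i => x i = true)).card % 2 with hPdef
  have hPiff : ∀ x, P x ↔
      ((I.filter (fun i => x i = true)).card : ZMod 2) ≠
      ((J.filter (fun i => x i = true)).card : ZMod 2) := by
    intro x
    simp only [hPdef, Ne, ZMod.natCast_eq_natCast_iff, Nat.ModEq]
  -- toggle lemma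
  have htoggle : ∀ x, P (flip x) ↔ ¬ P x := by
    intro x
    rw [hPiff, hPiff, hpar I, hpar J]
    rcases hk with ⟨hkI, hkJ⟩ | ⟨hkJ, hkI⟩
    · rw [if_pos hkI, if_neg hkJ]
      generalize ((I.filter (fun i => x i = true)).card : ZMod 2) = a
      generalize ((J.filter (fun i => x i = true)).card : ZMod 2) = b
      revert a b; decide
    · rw [if_neg hkI, if_pos hkJ]
      generalize ((I.filter (fun i => x i = true)).card : ZMod 2) = a
      generalize ((J.filter (fun i => x i = true)).card : ZMod 2) = b
      revert a b; decide
  -- hamming distance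
  have hdist : ∀ x, hammingDist (flip x) x = 1 := by
    intro x
    have : (univ.filter fun i => flip x i ≠ x i) = {k} := by
      ext i
      simp only [Finset.mem_filter, Finset.mem_univ, true_and, Finset.mem_singleton]
      constructor
      · intro h
        by_contra hi
        exact h (hflipne _ _ hi)
      · intro h
        rw [h, hflipk]
        cases x k <;> simp
    simp only [hammingDist]
    rw [this, Finset.card_singleton]
  set S : Finset (Fin n → Bool) := univ.filter P with hSdef
  set T : Finset (Fin n → Bool) := univ.filter (fun x => ¬ P x) with hTdef
  have hST : ∑ x ∈ S, D x + ∑ x ∈ T, D x = 1 := by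
    rw [hSdef, hTdef, Finset.sum_filter_add_sum_filter_not, hsum]
  have hbij : ∑ x ∈ S, D (flip x) = ∑ x ∈ T, D x := by
    apply Finset.sum_nbij' (i := flip) (j := flip)
    · intro a ha
      simp only [hSdef, Finset.mem_filter, Finset.mem_univ, true_and] at ha
      simp only [hTdef, Finset.mem_filter, Finset.mem_univ, true_and]
      rw [htoggle]; exact fun h => h ha
    · intro a ha
      simp only [hTdef, Finset.mem_filter, Finset.mem_univ, true_and] at ha
      simp only [hSdef, Finset.mem_filter, Finset.mem_univ, true_and]
      exact (htoggle a).mpr ha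
    · intro a _; exact hflipflip a
    · intro a _; exact hflipflip a
    · intro a _; rfl
  have h1α : (0:ℝ) < 1 + α := by linarith
  have hterm : ∀ x ∈ S, D x + D (flip x) ≤ (1 + α) * D x := by
    intro x _
    have := hlip (flip x) x (hdist x)
    nlinarith
  have hsumle : ∑ x ∈ S, (D x + D (flip x)) ≤ (1 + α) * ∑ x ∈ S, D x := by
    rw [Finset.mul_sum]
    exact Finset.sum_le_sum hterm
  have h1 : ∑ x ∈ S, (D x + D (flip x)) = 1 := by
    rw [Finset.sum_add_distrib, hbij, hST]
  rw [div_le_iff₀ h1α]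
  calc 1 = ∑ x ∈ S, (D x + D (flip x)) := h1.symm
    _ ≤ (1 + α) * ∑ x ∈ S, D x := hsumle
    _ = (∑ x ∈ S, D x) * (1 + α) := by ring
end

section
/- The VC dimension of the exact-in-the-ball robust loss class of any concept class C on {0,1}^n with robustness radius ρ = n − 1 is at most 2. That is, no set of three points x_1, x_2, x_3 ∈ {0,1}^n can be shattered by the family of functions ℓ(c_1,c_2)(x) = 1[∃ z ∈ B_{n−1}(x) : c_1(z) ≠ c_2(z)] for c_1, c_2 : {0,1}^n → {0,1}. -/
private lemma far_eq (n : ℕ) (x z : Fin n → Bool)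
    (h : ¬ hammingDist x z ≤ n - 1) : z = fun i => !x i := by
  rcases Nat.eq_zero_or_pos n with h0 | h0
  · subst h0
    exact absurd (by simp [Subsingleton.elim x z]) h
  have hle : hammingDist x z ≤ n := by
    simpa using (hammingDist_le_card_fintype (x := x) (y := z))
  have heq : hammingDist x z = n := le_antisymm hle (by omega)
  have : (Finset.univ.filter fun i => x i ≠ z i) = Finset.univ := by
    apply Finset.eq_univ_of_card
    simpa [Fintype.card_fin, hammingDist] using heq
  funext i
  have hi : x i ≠ z i := by
    have := Finset.mem_filter.mp (this ▸ Finset.mem_univ i)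
    exact this.2
  cases hx : x i <;> cases hz : z i <;> simp_all

theorem stmt_19 (n : ℕ) (x₁ x₂ x₃ : Fin n → Bool)
    (h12 : x₁ ≠ x₂) (h13 : x₁ ≠ x₃) (h23 : x₂ ≠ x₃) :
    ¬ ∀ b₁ b₂ b₃ : Bool, ∃ c₁ c₂ : (Fin n → Bool) → Bool,
      ((∃ z : Fin n → Bool, hammingDist x₁ z ≤ n - 1 ∧ c₁ z ≠ c₂ z) ↔ b₁ = true) ∧
      ((∃ z : Fin n → Bool, hammingDist x₂ z ≤ n - 1 ∧ c₁ z ≠ c₂ z) ↔ b₂ = true) ∧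
      ((∃ z : Fin n → Bool, hammingDist x₃ z ≤ n - 1 ∧ c₁ z ≠ c₂ z) ↔ b₃ = true) := by
  intro h
  obtain ⟨c₁, c₂, H1, H2, H3⟩ := h true false false
  obtain ⟨z, hz, hne⟩ := H1.mpr rfl
  have h2 : ¬ hammingDist x₂ z ≤ n - 1 := fun hd => by
    simpa using H2.mp ⟨z, hd, hne⟩
  have h3 : ¬ hammingDist x₃ z ≤ n - 1 := fun hd => by
    simpa using H3.mp ⟨z, hd, hne⟩
  have e2 := far_eq n x₂ z h2
  have e3 := far_eq n x₃ z h3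
  apply h23
  funext i
  have : (!x₂ i) = (!x₃ i) := by rw [← congrFun e2 i, ← congrFun e3 i]
  simpa using this
end
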